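/- arXiv:2203.09265 — 3 statements merged into one kernel-verified Lean document; each statement's English description precedes it below -/
import Mathlib

section
/- Let θ, α be nonconstant inner functions and φ ∈ L^∞(𝕋). The asymmetric dual truncated Toeplitz operator D_φ^{θ,α} : K_θ^⊥ → K_α^⊥ is shift invariant: for all f ∈ K_θ^⊥ and g ∈ K_α^⊥ with z·f ∈ K_θ^⊥ and z·g ∈ K_α^⊥, one has ⟨D_φ^{θ,α}(z f), z g⟩ = ⟨D_φ^{θ,α} f, g⟩. -/
open MeasureTheory Complex ComplexConjugate

noncomputable section

instance : Fact (0 < 2 * Real.pi) := ⟨by positivity⟩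

abbrev 𝕋 : Type := AddCircle (2 * Real.pi)

abbrev m : Measure 𝕋 := AddCircle.haarAddCircle

def e : 𝕋 → ℂ := fun x => fourier 1 x

def Hardy2 : Set (𝕋 → ℂ) :=
  {f | MemLp f 2 m ∧ ∀ n : ℤ, n < 0 → fourierCoeff f n = 0}

def Hardy2neg : Set (𝕋 → ℂ) :=
  {f | MemLp f 2 m ∧ ∀ n : ℤ, 0 ≤ n → fourierCoeff f n = 0}

def thetaH2 (θ : 𝕋 → ℂ) : Set (𝕋 → ℂ) :=
  {g | ∃ h ∈ Hardy2, g =ᵐ[m] fun x => θ x * h x}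

def Kmodel (θ : 𝕋 → ℂ) : Set (𝕋 → ℂ) :=
  {f | f ∈ Hardy2 ∧ ∀ g ∈ thetaH2 θ, ∫ x, f x * conj (g x) ∂m = 0}

def Kperp (θ : 𝕋 → ℂ) : Set (𝕋 → ℂ) :=
  {f | ∃ g ∈ thetaH2 θ, ∃ h ∈ Hardy2neg, f =ᵐ[m] fun x => g x + h x}

def Cfun (θ f : 𝕋 → ℂ) : 𝕋 → ℂ := fun x => θ x * conj (e x) * conj (f x)

def Jfun (f : 𝕋 → ℂ) : 𝕋 → ℂ := fun x => conj (e x) * conj (f x)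

def IsInner (θ : 𝕋 → ℂ) : Prop :=
  MemLp θ ⊤ m ∧ (∀ᵐ x ∂m, ‖θ x‖ = 1) ∧ ∀ n : ℤ, n < 0 → fourierCoeff θ n = 0

def NCInner (θ : 𝕋 → ℂ) : Prop := IsInner θ ∧ ¬∃ c : ℂ, θ =ᵐ[m] fun _ => c

def IsPneg (f g : 𝕋 → ℂ) : Prop :=
  g ∈ Hardy2neg ∧ ∀ n : ℤ, n < 0 → fourierCoeff g n = fourierCoeff f n

def IsPpos (f g : 𝕋 → ℂ) : Prop :=
  g ∈ Hardy2 ∧ ∀ n : ℤ, 0 ≤ n → fourierCoeff g n = fourierCoeff f n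

def IsProjOn (S : Set (𝕋 → ℂ)) (f g : 𝕋 → ℂ) : Prop :=
  g ∈ S ∧ ∀ u ∈ S, ∫ x, (f x - g x) * conj (u x) ∂m = 0

/-!
Multiplication by `z` is unitary on `L²(𝕋)`. Testing the defining orthogonality of the two
projections against `z g` and `g` gives `⟨D(zf), zg⟩ = ⟨φ z f, z g⟩` and `⟨D f, g⟩ = ⟨φ f, g⟩`,
and `|z| = 1` makes the right-hand sides equal.
-/

lemma integrable_mul_conj_of_memLp_two {X : Type*} [MeasurableSpace X] {μ : Measure X}
    {f g : X → ℂ} (hf : MemLp f 2 μ) (hg : MemLp g 2 μ) :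
    Integrable (fun x => f x * conj (g x)) μ :=
  hf.integrable_mul (g := star g) hg.star

lemma memLp_two_of_mem_Kperp {θ f : 𝕋 → ℂ} (hθ : MemLp θ ⊤ m) (hf : f ∈ Kperp θ) :
    MemLp f 2 m := by
  obtain ⟨g, ⟨h, hh, hg⟩, k, hk, hfgk⟩ := hf
  have hg2 : MemLp g 2 m := (hh.1.mul' hθ).ae_eq hg.symm
  exact (hg2.add hk.1).ae_eq hfgk.symm

lemma IsProjOn.integral_mul_conj_eq {S : Set (𝕋 → ℂ)} {F P w : 𝕋 → ℂ} (hP : IsProjOn S F P)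
    (hw : w ∈ S) (hF : MemLp F 2 m) (hP2 : MemLp P 2 m) (hw2 : MemLp w 2 m) :
    ∫ x, P x * conj (w x) ∂m = ∫ x, F x * conj (w x) ∂m := by
  have horth : ∫ x, (F x - P x) * conj (w x) ∂m = 0 := hP.2 w hw
  simp only [sub_mul] at horth
  rw [integral_sub (integrable_mul_conj_of_memLp_two hF hw2)
    (integrable_mul_conj_of_memLp_two hP2 hw2)] at horth
  exact (sub_eq_zero.mp horth).symm

lemma e_mul_conj_e (x : 𝕋) : e x * conj (e x) = 1 := by
  rw [e, ← fourier_neg, ← fourier_add]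
  simp

/-- Asymmetric dual truncated Toeplitz operators are shift invariant:
⟨D_φ^{θ,α}(zf), zg⟩ = ⟨D_φ^{θ,α} f, g⟩ whenever zf ∈ K_θ^⊥ and zg ∈ K_α^⊥. -/
theorem stmt10 (θ α φ : 𝕋 → ℂ) (hθ : NCInner θ) (hα : NCInner α) (hφ : MemLp φ ⊤ m)
    (f g : 𝕋 → ℂ) (hf : f ∈ Kperp θ) (hg : g ∈ Kperp α)
    (hzf : (fun x => e x * f x) ∈ Kperp θ) (hzg : (fun x => e x * g x) ∈ Kperp α)
    (u v : 𝕋 → ℂ)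
    (hu : IsProjOn (Kperp α) (fun x => φ x * f x) u)
    (hv : IsProjOn (Kperp α) (fun x => φ x * (e x * f x)) v) :
    ∫ x, v x * conj (e x * g x) ∂m = ∫ x, u x * conj (g x) ∂m := by
  have hθ2 : ∀ {h}, h ∈ Kperp θ → MemLp h 2 m := memLp_two_of_mem_Kperp hθ.1.1
  have hα2 : ∀ {h}, h ∈ Kperp α → MemLp h 2 m := memLp_two_of_mem_Kperp hα.1.1
  rw [hv.integral_mul_conj_eq hzg ((hθ2 hzf).mul' hφ) (hα2 hv.1) (hα2 hzg),
    hu.integral_mul_conj_eq hg ((hθ2 hf).mul' hφ) (hα2 hu.1) (hα2 hg)]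
  congr 1 with x
  calc φ x * (e x * f x) * conj (e x * g x)
      = φ x * f x * conj (g x) * (e x * conj (e x)) := by rw [map_mul]; ring
    _ = φ x * f x * conj (g x) := by rw [e_mul_conj_e, mul_one]
end
end

section
/- Let θ, α be nonconstant inner functions and φ ∈ L^∞(𝕋). Then C_α ∘ D_φ^{θ,α} ∘ C_θ restricted to K_θ^⊥ equals D_{α·conj(φ)·conj(θ)}^{θ,α}, where C_θ f = θ conj(z) conj(f) and C_α g = α conj(z) conj(g). -/
open MeasureTheory Complex ComplexConjugate

noncomputable section

/-!
`C_α` is conjugate-linear and satisfies `⟨C_α g, t⟩ = conj ⟨g, C_α t⟩` pointwise, so it maps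
the orthogonal projection of `F` onto `K_α^⊥` (which `C_α` preserves, since `J : f ↦ z̄ f̄`
swaps `H²` and `H²₋`) to the orthogonal projection of `C_α F`. Since `|z| = 1`,
`C_α (φ · C_θ f) = α φ̄ θ̄ f`, and orthogonal projections of `L²` functions are unique a.e.
-/

lemma conj_e_mul_e (x : 𝕋) : conj (e x) * e x = 1 := by
  rw [mul_comm, mul_conj', show ‖e x‖ = 1 from Circle.norm_coe _]
  norm_num

lemma fourierCoeff_jfun (f : 𝕋 → ℂ) (n : ℤ) :
    fourierCoeff (Jfun f) n = conj (fourierCoeff f (-n - 1)) := by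
  rw [fourierCoeff, fourierCoeff, ← integral_conj]
  refine integral_congr_ae (Filter.Eventually.of_forall fun x => ?_)
  have hconj_e : conj (e x) = fourier (-1) x := by rw [fourier_neg]; rfl
  simp only [Jfun, smul_eq_mul, map_mul, neg_sub, sub_neg_eq_add, ← fourier_neg, hconj_e]
  rw [show -(1 + n) = -n + -1 by ring, fourier_add]
  ring

lemma memLp_jfun {f : 𝕋 → ℂ} (hf : MemLp f 2 m) : MemLp (Jfun f) 2 m := by
  have hconj_e : AEStronglyMeasurable (fun x => conj (e x)) m :=
    (continuous_conj.comp (map_continuous (fourier 1))).aestronglyMeasurable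
  refine hf.of_le (hconj_e.mul hf.star.1) (Filter.Eventually.of_forall fun x => ?_)
  simp [Jfun, e, Circle.norm_coe]

lemma jfun_mem_hardy2 {h : 𝕋 → ℂ} (hh : h ∈ Hardy2neg) : Jfun h ∈ Hardy2 :=
  ⟨memLp_jfun hh.1, fun n hn => by rw [fourierCoeff_jfun, hh.2 (-n - 1) (by omega), map_zero]⟩

lemma jfun_mem_hardy2neg {h : 𝕋 → ℂ} (hh : h ∈ Hardy2) : Jfun h ∈ Hardy2neg :=
  ⟨memLp_jfun hh.1, fun n hn => by rw [fourierCoeff_jfun, hh.2 (-n - 1) (by omega), map_zero]⟩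

lemma memLp_of_mem_kperp {α t : 𝕋 → ℂ} (hα : MemLp α ⊤ m) (ht : t ∈ Kperp α) :
    MemLp t 2 m := by
  obtain ⟨g, ⟨h', hh', hgh⟩, h, hh, hth⟩ := ht
  have hg : MemLp g 2 m := (hh'.1.mul' hα).ae_eq hgh.symm
  exact (hg.add hh.1).ae_eq hth.symm

/-- `C_α = α · J` on `α H² ⊕ H²₋`, with `J (α h') = ᾱ · J h'` because `|α| = 1`. -/
lemma cfun_mem_kperp {α t : 𝕋 → ℂ} (hα : ∀ᵐ x ∂m, ‖α x‖ = 1) (ht : t ∈ Kperp α) :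
    Cfun α t ∈ Kperp α := by
  obtain ⟨g, ⟨h', hh', hgh⟩, h, hh, hth⟩ := ht
  refine ⟨fun x => α x * Jfun h x, ⟨Jfun h, jfun_mem_hardy2 hh, .rfl⟩,
    Jfun h', jfun_mem_hardy2neg hh', ?_⟩
  filter_upwards [hth, hgh, hα] with x hthx hghx hαx
  have hα_mul_conj : α x * conj (α x) = 1 := by rw [mul_conj', hαx]; norm_num
  simp only [Cfun, Jfun, hthx, hghx, map_add, map_mul]
  linear_combination (conj (e x) * conj (h' x)) * hα_mul_conj

lemma cfun_mul_conj (α g t : 𝕋 → ℂ) (x : 𝕋) :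
    Cfun α g x * conj (t x) = conj (g x * conj (Cfun α t x)) := by
  simp only [Cfun, map_mul, conj_conj]
  ring

lemma IsProjOn.cfun {S : Set (𝕋 → ℂ)} {α F u : 𝕋 → ℂ} (hS : ∀ t ∈ S, Cfun α t ∈ S)
    (h : IsProjOn S F u) : IsProjOn S (Cfun α F) (Cfun α u) := by
  refine ⟨hS u h.1, fun t ht => ?_⟩
  have hsub : ∀ x, Cfun α F x - Cfun α u x = Cfun α (fun y => F y - u y) x := fun x => by
    simp only [Cfun, map_sub]
    ring
  simp only [hsub, cfun_mul_conj, integral_conj, h.2 _ (hS t ht), map_zero]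

lemma ae_eq_zero_of_integral_mul_conj_self_eq_zero {X : Type*} [MeasurableSpace X]
    {μ : Measure X} {g : X → ℂ} (hg : MemLp g 2 μ) (h : ∫ x, g x * conj (g x) ∂μ = 0) :
    g =ᵐ[μ] 0 := by
  simp only [mul_conj', ← ofReal_pow] at h
  rw [integral_complex_ofReal, ofReal_eq_zero,
    integral_eq_zero_iff_of_nonneg (fun x => by positivity) hg.norm.integrable_sq] at h
  filter_upwards [h] with x hx
  simpa using hx

lemma IsProjOn.ae_eq {S : Set (𝕋 → ℂ)} {F u v : 𝕋 → ℂ} (hF : MemLp F 2 m)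
    (hu : IsProjOn S F u) (hv : IsProjOn S F v) (huL : MemLp u 2 m) (hvL : MemLp v 2 m) :
    u =ᵐ[m] v := by
  have hint : ∀ {g : 𝕋 → ℂ}, MemLp g 2 m → ∀ {t : 𝕋 → ℂ}, MemLp t 2 m →
      Integrable (fun x => (F x - g x) * conj (t x)) m := fun hg _ ht =>
    (hF.sub hg).integrable_mul ht.star
  have hexpand : ∀ x, (u x - v x) * conj (u x - v x) =
      ((F x - v x) * conj (u x) - (F x - u x) * conj (u x)) -
        ((F x - v x) * conj (v x) - (F x - u x) * conj (v x)) := fun x => by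
    rw [map_sub]
    ring
  have hint_u : Integrable (fun x => (F x - v x) * conj (u x) - (F x - u x) * conj (u x)) m :=
    (hint hvL huL).sub (hint huL huL)
  have hint_v : Integrable (fun x => (F x - v x) * conj (v x) - (F x - u x) * conj (v x)) m :=
    (hint hvL hvL).sub (hint huL hvL)
  have hzero : ∫ x, (u x - v x) * conj (u x - v x) ∂m = 0 := by
    simp only [hexpand]
    rw [integral_sub hint_u hint_v,
      integral_sub (hint hvL huL) (hint huL huL), integral_sub (hint hvL hvL) (hint huL hvL),
      hu.2 _ hu.1, hu.2 _ hv.1, hv.2 _ hu.1, hv.2 _ hv.1]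
    ring
  filter_upwards [ae_eq_zero_of_integral_mul_conj_self_eq_zero (huL.sub hvL) hzero] with x hx
  exact sub_eq_zero.mp hx

lemma cfun_mul_cfun (α θ φ f : 𝕋 → ℂ) :
    Cfun α (fun x => φ x * Cfun θ f x) = fun x => (α x * conj (φ x) * conj (θ x)) * f x := by
  funext x
  simp only [Cfun, map_mul, conj_conj]
  linear_combination (α x * conj (φ x) * conj (θ x) * f x) * conj_e_mul_e x

/-- C_α ∘ D_φ^{θ,α} ∘ C_θ = D_{α conj(φ) conj(θ)}^{θ,α} on K_θ^⊥. -/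
theorem stmt11 (θ α φ : 𝕋 → ℂ) (hθ : NCInner θ) (hα : NCInner α) (hφ : MemLp φ ⊤ m)
    (f : 𝕋 → ℂ) (hf : f ∈ Kperp θ)
    (u v : 𝕋 → ℂ)
    (hu : IsProjOn (Kperp α) (fun x => φ x * Cfun θ f x) u)
    (hv : IsProjOn (Kperp α) (fun x => (α x * conj (φ x) * conj (θ x)) * f x) v) :
    Cfun α u =ᵐ[m] v := by
  have hα_top : MemLp α ⊤ m := hα.1.1
  have hCu : IsProjOn (Kperp α) (fun x => (α x * conj (φ x) * conj (θ x)) * f x) (Cfun α u) := by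
    rw [← cfun_mul_cfun]
    exact hu.cfun fun t => cfun_mem_kperp hα.1.2.1
  have hsymbol : MemLp (fun x => α x * conj (φ x) * conj (θ x)) ⊤ m :=
    hθ.1.1.star.mul' (hφ.star.mul' hα_top (r := ⊤)) (r := ⊤)
  exact hCu.ae_eq ((memLp_of_mem_kperp hθ.1.1 hf).mul' hsymbol) hv
    (memLp_of_mem_kperp hα_top hCu.1) (memLp_of_mem_kperp hα_top hv.1)
end
end

section
/- Let θ, α be nonconstant inner functions and φ ∈ L^∞(𝕋). Write φ = φ⁻ + φ⁺ with φ⁺ ∈ H², φ⁻ ∈ H²₋, and let D = D_φ^{θ,α}. Then φ⁻ = P⁻(z · D(conj z)) and φ⁺ = J(P⁻(D*(conj z))), where J f = conj(z)·conj(f). In particular, the symbol φ is uniquely recovered from D(conj z) and D*(conj z). -/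
/-! Everything is read off Fourier coefficients. For `n < 0` the character `zⁿ` lies in
`H²₋ ⊆ K_θ^⊥`, so a projection onto `K_θ^⊥` keeps all negative Fourier coefficients.
Thus `D(z̄) = P_{K_α^⊥}(φ z̄)` has `n`-th coefficient `φ̂(n + 1)` for `n < 0`, and multiplying by `z`
recovers the negative coefficients of `φ`, i.e. `φ⁻`. Likewise `D*(z̄) = P_{K_θ^⊥}(φ̄ z̄)` has
`n`-th coefficient `conj φ̂(-n - 1)` for `n < 0`, and `J` moves these to the nonnegative
coefficients of `φ`, i.e. `φ⁺`. Functions in `H²` or `H²₋` are determined by those coefficients. -/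

open MeasureTheory Complex ComplexConjugate

noncomputable section

theorem MeasureTheory.Integrable.conj {α 𝕜 : Type*} [MeasurableSpace α] [RCLike 𝕜]
    {μ : Measure α} {f : α → 𝕜} (hf : Integrable f μ) : Integrable (fun x => conj (f x)) μ :=
  hf.mono (RCLike.continuous_conj.comp_aestronglyMeasurable hf.1)
    (.of_forall fun _ => (RCLike.norm_conj _).le)

section FourierCoeff

variable {T : ℝ} [Fact (0 < T)]

theorem fourierCoeff_fourier_mul (k : ℤ) (f : AddCircle T → ℂ) (n : ℤ) :
    fourierCoeff (fun x => fourier k x * f x) n = fourierCoeff f (n - k) := by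
  simp only [fourierCoeff, smul_eq_mul, ← mul_assoc, ← fourier_add, neg_add_eq_sub, neg_sub]

theorem fourierCoeff_conj (f : AddCircle T → ℂ) (n : ℤ) :
    fourierCoeff (fun x => conj (f x)) n = conj (fourierCoeff f (-n)) := by
  simp only [fourierCoeff, smul_eq_mul, ← integral_conj, map_mul, ← fourier_neg, neg_neg]

theorem integral_mul_conj_fourier (f : AddCircle T → ℂ) (n : ℤ) :
    ∫ x, f x * conj (fourier n x) ∂AddCircle.haarAddCircle = fourierCoeff f n := by
  simp only [fourierCoeff, smul_eq_mul, ← fourier_neg, mul_comm]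

theorem MeasureTheory.Integrable.mul_conj_fourier {f : AddCircle T → ℂ}
    (hf : Integrable f AddCircle.haarAddCircle) (n : ℤ) :
    Integrable (fun x => f x * conj (fourier n x)) AddCircle.haarAddCircle := by
  simpa only [smul_eq_mul, fourier_neg, mul_comm] using hf.fourier_smul (-n)

theorem ae_eq_of_fourierCoeff_eq {f g : AddCircle T → ℂ} (hf : MemLp f 2 AddCircle.haarAddCircle)
    (hg : MemLp g 2 AddCircle.haarAddCircle) (h : fourierCoeff f = fourierCoeff g) :
    f =ᵐ[AddCircle.haarAddCircle] g := by
  have hLp : hf.toLp f = hg.toLp g := by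
    refine fourierBasis.repr.injective (lp.ext (funext fun n => ?_))
    rw [fourierBasis_repr, fourierBasis_repr, fourierCoeff_congr_ae hf.coeFn_toLp,
      fourierCoeff_congr_ae hg.coeFn_toLp, h]
  exact hf.coeFn_toLp.symm.trans (hLp ▸ hg.coeFn_toLp)

end FourierCoeff

theorem conj_e (x : 𝕋) : conj (e x) = fourier (-1) x := fourier_neg.symm

theorem fourierCoeff_e_mul (f : 𝕋 → ℂ) (n : ℤ) :
    fourierCoeff (fun x => e x * f x) n = fourierCoeff f (n - 1) :=
  fourierCoeff_fourier_mul 1 f n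

theorem fourierCoeff_mul_conj_e (f : 𝕋 → ℂ) (n : ℤ) :
    fourierCoeff (fun x => f x * conj (e x)) n = fourierCoeff f (n + 1) := by
  simp only [conj_e, mul_comm (f _), fourierCoeff_fourier_mul, sub_neg_eq_add]

theorem MeasureTheory.Integrable.mul_conj_e {f : 𝕋 → ℂ} (hf : Integrable f m) :
    Integrable (fun x => f x * conj (e x)) m :=
  hf.mul_conj_fourier 1

theorem fourierCoeff_Jfun (f : 𝕋 → ℂ) (n : ℤ) :
    fourierCoeff (Jfun f) n = conj (fourierCoeff f (-(n + 1))) := by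
  have hJ : Jfun f = fun x => conj (f x) * conj (e x) := funext fun x => mul_comm _ _
  rw [hJ, fourierCoeff_mul_conj_e, fourierCoeff_conj]

theorem Hardy2neg.ae_eq_of_fourierCoeff_eq {f g : 𝕋 → ℂ} (hf : f ∈ Hardy2neg)
    (hg : g ∈ Hardy2neg) (h : ∀ n : ℤ, n < 0 → fourierCoeff f n = fourierCoeff g n) :
    f =ᵐ[m] g := by
  refine _root_.ae_eq_of_fourierCoeff_eq hf.1 hg.1 (funext fun n => ?_)
  rcases lt_or_ge n 0 with hn | hn
  · exact h n hn
  · rw [hf.2 n hn, hg.2 n hn]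

theorem Hardy2.ae_eq_of_fourierCoeff_eq {f g : 𝕋 → ℂ} (hf : f ∈ Hardy2)
    (hg : g ∈ Hardy2) (h : ∀ n : ℤ, 0 ≤ n → fourierCoeff f n = fourierCoeff g n) :
    f =ᵐ[m] g := by
  refine _root_.ae_eq_of_fourierCoeff_eq hf.1 hg.1 (funext fun n => ?_)
  rcases lt_or_ge n 0 with hn | hn
  · rw [hf.2 n hn, hg.2 n hn]
  · exact h n hn

theorem Jfun_mem_Hardy2 {f : 𝕋 → ℂ} (hf : f ∈ Hardy2neg) : Jfun f ∈ Hardy2 := by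
  have hmeas : AEStronglyMeasurable (Jfun f) m :=
    (continuous_conj.comp (fourier 1).continuous).aestronglyMeasurable.mul
      (continuous_conj.comp_aestronglyMeasurable hf.1.1)
  refine ⟨hf.1.of_le hmeas (.of_forall fun x => ?_), fun n hn => ?_⟩
  · simp [Jfun, e, Circle.norm_coe]
  · rw [fourierCoeff_Jfun, hf.2 _ (by omega), map_zero]

theorem fourier_mem_Hardy2neg {n : ℤ} (hn : n < 0) : (fun x : 𝕋 => fourier n x) ∈ Hardy2neg := by
  refine ⟨ContinuousMap.memLp m ℂ (fourier n), fun k hk => ?_⟩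
  rw [fourierCoeff_fourier, Pi.single_eq_of_ne (by omega)]

theorem Hardy2neg_subset_Kperp (θ : 𝕋 → ℂ) : Hardy2neg ⊆ Kperp θ := fun f hf =>
  ⟨0, ⟨0, ⟨MemLp.zero', fun n _ => by simp [fourierCoeff]⟩, .of_forall fun x => by simp⟩, f, hf,
    .of_forall fun x => by simp⟩

theorem integrable_of_mem_Kperp {θ f : 𝕋 → ℂ} (hθ : MemLp θ ⊤ m) (hf : f ∈ Kperp θ) :
    Integrable f m := by
  obtain ⟨g, ⟨h, hh, hg⟩, k, hk, hf⟩ := hf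
  have hg_int : Integrable g m :=
    ((hh.1.integrable one_le_two).mul_of_top_right hθ).congr hg.symm
  exact (hg_int.add (hk.1.integrable one_le_two)).congr hf.symm

/-- Testing the orthogonality against `fourier n ∈ H²₋ ⊆ K_θ^⊥` reads off the `n`-th coefficient. -/
theorem IsProjOn.fourierCoeff_eq {θ F u : 𝕋 → ℂ} (hθ : MemLp θ ⊤ m) (hF : Integrable F m)
    (hu : IsProjOn (Kperp θ) F u) {n : ℤ} (hn : n < 0) :
    fourierCoeff u n = fourierCoeff F n := by
  have horth := hu.2 _ (Hardy2neg_subset_Kperp θ (fourier_mem_Hardy2neg hn))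
  have hu_int := integrable_of_mem_Kperp hθ hu.1
  simp only [sub_mul] at horth
  rw [integral_sub (hF.mul_conj_fourier n) (hu_int.mul_conj_fourier n),
    integral_mul_conj_fourier, integral_mul_conj_fourier, sub_eq_zero] at horth
  exact horth.symm

theorem fourierCoeff_eq_add_of_ae_eq {φ φm φp : 𝕋 → ℂ} (hφm : φm ∈ Hardy2neg) (hφp : φp ∈ Hardy2)
    (hdec : φ =ᵐ[m] fun x => φm x + φp x) (n : ℤ) :
    fourierCoeff φ n = fourierCoeff φm n + fourierCoeff φp n := by
  rw [fourierCoeff_congr_ae hdec, ← Pi.add_apply (fourierCoeff φm),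
    ← fourierCoeff.add (hφm.1.integrable one_le_two) (hφp.1.integrable one_le_two)]
  rfl

theorem stmt13_general (θ α φ : 𝕋 → ℂ) (hθ : NCInner θ) (hα : NCInner α)
    (φp φm : 𝕋 → ℂ) (hφp : φp ∈ Hardy2) (hφm : φm ∈ Hardy2neg)
    (hdec : φ =ᵐ[m] fun x => φm x + φp x)
    (u v : 𝕋 → ℂ)
    (hu : IsProjOn (Kperp α) (fun x => φ x * conj (e x)) u)
    (hv : IsProjOn (Kperp θ) (fun x => conj (φ x) * conj (e x)) v) :
    (∀ w : 𝕋 → ℂ, IsPneg (fun x => e x * u x) w → φm =ᵐ[m] w) ∧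
    (∀ w : 𝕋 → ℂ, IsPneg v w → φp =ᵐ[m] Jfun w) := by
  have hφ : Integrable φ m :=
    ((hφm.1.integrable one_le_two).add (hφp.1.integrable one_le_two)).congr hdec.symm
  have hu_coeff (n : ℤ) (hn : n < 0) : fourierCoeff u (n - 1) = fourierCoeff φ n := by
    rw [hu.fourierCoeff_eq hα.1.1 hφ.mul_conj_e (by omega), fourierCoeff_mul_conj_e, sub_add_cancel]
  have hv_coeff (n : ℤ) (hn : 0 ≤ n) : fourierCoeff v (-(n + 1)) = conj (fourierCoeff φ n) := by
    rw [hv.fourierCoeff_eq hθ.1.1 hφ.conj.mul_conj_e (by omega), fourierCoeff_mul_conj_e,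
      fourierCoeff_conj, show -(-(n + 1) + 1) = n by ring]
  constructor
  · intro w hw
    refine Hardy2neg.ae_eq_of_fourierCoeff_eq hφm hw.1 fun n hn => ?_
    rw [hw.2 n hn, fourierCoeff_e_mul, hu_coeff n hn,
      fourierCoeff_eq_add_of_ae_eq hφm hφp hdec, hφp.2 n hn, add_zero]
  · intro w hw
    refine Hardy2.ae_eq_of_fourierCoeff_eq hφp (Jfun_mem_Hardy2 hw.1) fun n hn => ?_
    rw [fourierCoeff_Jfun, hw.2 (-(n + 1)) (by omega), hv_coeff n hn, Complex.conj_conj,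
      fourierCoeff_eq_add_of_ae_eq hφm hφp hdec, hφm.2 n hn, zero_add]

/-- Symbol recovery: φ⁻ = P⁻(z·D(conj z)) and φ⁺ = J(P⁻(D*(conj z))). -/
theorem stmt13 (θ α φ : 𝕋 → ℂ) (hθ : NCInner θ) (hα : NCInner α) (hφ : MemLp φ ⊤ m)
    (φp φm : 𝕋 → ℂ) (hφp : φp ∈ Hardy2) (hφm : φm ∈ Hardy2neg)
    (hdec : φ =ᵐ[m] fun x => φm x + φp x)
    (u v : 𝕋 → ℂ)
    (hu : IsProjOn (Kperp α) (fun x => φ x * conj (e x)) u)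
    (hv : IsProjOn (Kperp θ) (fun x => conj (φ x) * conj (e x)) v) :
    (∀ w : 𝕋 → ℂ, IsPneg (fun x => e x * u x) w → φm =ᵐ[m] w) ∧
    (∀ w : 𝕋 → ℂ, IsPneg v w → φp =ᵐ[m] Jfun w) :=
  stmt13_general θ α φ hθ hα φp φm hφp hφm hdec u v hu hv
end
end
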